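/- arXiv:1101.6075 — 6 statements merged into one kernel-verified Lean document; each statement's English description precedes it below -/
import Mathlib

section
/- For nets of functions f_ε, g_ε : ℝ → ℝ, the induced internal maps [f_ε] and [g_ε] on *ℝ (defined by [f_ε]([x_ε]) = [f_ε(x_ε)]) are equal if and only if f_ε = g_ε for all sufficiently small ε. -/
open Filter Set

/-- The filter of "small ε" : neighborhoods of 0 within (0,1). -/
noncomputable def L : Filter ℝ := nhdsWithin 0 (Set.Ioo 0 1)

/-- The generalized reals: germs of nets (0,1) → ℝ at ε → 0⁺. -/
abbrev SR : Type := Filter.Germ L ℝ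

/-- The internal map [f_ε] induced by a net of functions, acting representative-wise. -/
noncomputable def internalMap (f : ℝ → ℝ → ℝ) (x : SR) : SR :=
  Filter.Germ.map₂ (fun (g : ℝ → ℝ) (y : ℝ) => g y) (↑f : Filter.Germ L (ℝ → ℝ)) x

theorem exists_net_apply_eq_imp_eq {ι α β : Type*} [Nonempty α] (f g : ι → α → β) :
    ∃ x : ι → α, ∀ ε, f ε (x ε) = g ε (x ε) → f ε = g ε := by
  have separating_point : ∀ ε, ∃ y, f ε y = g ε y → f ε = g ε := fun ε => by
    by_cases hfg : f ε = g ε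
    · exact ⟨Classical.arbitrary α, fun _ => hfg⟩
    · obtain ⟨y, hy⟩ := Function.ne_iff.mp hfg
      exact ⟨y, fun h => absurd h hy⟩
  choose x hx using separating_point
  exact ⟨x, hx⟩

theorem Filter.Germ.map₂_eval_eq_iff {ι α β : Type*} [Nonempty α] {l : Filter ι}
    (f g : ι → α → β) :
    (∀ x : Germ l α, map₂ (fun h y => h y) (f : Germ l (α → β)) x =
        map₂ (fun h y => h y) (g : Germ l (α → β)) x) ↔ f =ᶠ[l] g := by
  refine ⟨fun h => ?_, fun h x => ?_⟩
  · obtain ⟨x, hx⟩ := exists_net_apply_eq_imp_eq f g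
    filter_upwards [Germ.coe_eq.mp (h x)] with ε hε using hx ε hε
  · induction x using Germ.inductionOn with
    | _ x => exact Germ.coe_eq.mpr (h.mono fun ε hε => congrFun hε (x ε))

theorem internalMap_eq_iff (f g : ℝ → ℝ → ℝ) :
    internalMap f = internalMap g ↔ ∀ᶠ ε in L, f ε = g ε :=
  funext_iff.trans (Germ.map₂_eval_eq_iff f g)
end

section
/- Idempotent decomposition of the order: for all x, y ∈ *ℝ there exists e ∈ *ℝ with e² = e, x·e ≤ y·e, and y·(1−e) ≤ x·(1−e). -/
open Filter Set

/-! In a linear order the idempotent is `1` or `0` according as `a ≤ b` or not. On nets this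
choice is made pointwise, giving the indicator of `{ε | x ε ≤ y ε}`, and taking germs is a
monotone ring homomorphism, so the three relations pass to `*ℝ`. -/

section

variable {R : Type*} [Ring R] [LinearOrder R]

theorem exists_idempotent_separating (a b : R) :
    ∃ e : R, e ^ 2 = e ∧ a * e ≤ b * e ∧ b * (1 - e) ≤ a * (1 - e) := by
  rcases le_total a b with hab | hba
  · exact ⟨1, one_pow 2, by simpa using hab, by simp⟩
  · exact ⟨0, zero_pow two_ne_zero, by simp, by simpa using hba⟩

theorem Pi.exists_idempotent_separating {α : Type*} (f g : α → R) :
    ∃ e : α → R, e ^ 2 = e ∧ f * e ≤ g * e ∧ g * (1 - e) ≤ f * (1 - e) := by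
  choose e he hfg hgf using fun t => _root_.exists_idempotent_separating (f t) (g t)
  exact ⟨e, funext he, hfg, hgf⟩

theorem Filter.Germ.monotone_coeRingHom {α : Type*} (l : Filter α) :
    Monotone (Germ.coeRingHom (R := R) l) :=
  fun _ _ h => Germ.coe_le.2 (Eventually.of_forall h)

theorem Filter.Germ.exists_idempotent_separating {α : Type*} {l : Filter α} (x y : Germ l R) :
    ∃ e : Germ l R, e ^ 2 = e ∧ x * e ≤ y * e ∧ y * (1 - e) ≤ x * (1 - e) := by
  induction x, y using Germ.inductionOn₂ with
  | h f g =>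
    obtain ⟨e, he, hfg, hgf⟩ := Pi.exists_idempotent_separating f g
    have hmono := Germ.monotone_coeRingHom (R := R) l
    refine ⟨Germ.coeRingHom l e, by rw [← map_pow, he], ?_, ?_⟩
    · simpa only [map_mul, Germ.coe_coeRingHom] using hmono hfg
    · simpa only [map_mul, map_sub, map_one, Germ.coe_coeRingHom] using hmono hgf

end

theorem idempotent_order_decomposition (x y : SR) :
    ∃ e : SR, e ^ 2 = e ∧ x * e ≤ y * e ∧ y * (1 - e) ≤ x * (1 - e) :=
  Filter.Germ.exists_idempotent_separating x y
end

section
/- Countable saturation: if (B_n) is a sequence of internal subsets of *ℝ with the finite intersection property (every finite subfamily has nonempty intersection), then the intersection of all B_n is nonempty. -/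
/-!
The small-ε filter is countably incomplete: the sets `(0, 1/(k+1))` belong to it but have empty
intersection. By the finite intersection property, for each `k` some net `a k` lies in
`A₀ ε, …, A_k ε` for small `ε`. Let `u k` be the set of `ε` at which, for every `j ≤ k`,
`ε < 1/(j+1)` and `a j ε ∈ A₀ ε, …, A_j ε`; these sets are small-ε neighbourhoods decreasing to
`∅`, so every `ε` has a last stage `m` with `ε ∈ u m`, and the diagonal net `b ε := a m ε` lies in
`A_n ε` as soon as `ε ∈ u n`.
-/

open Filter Set

/-- The internal set [A_ε] associated to a net of sets. -/
def internalSet (A : ℝ → Set ℝ) : Set SR :=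
  {x : SR | ∃ a : ℝ → ℝ, (↑a : SR) = x ∧ ∀ᶠ ε in L, a ε ∈ A ε}

/-- A set of generalized reals is internal if it is of the form [A_ε]. -/
def IsInternal (S : Set SR) : Prop :=
  ∃ A : ℝ → Set ℝ, (∀ ε, (A ε).Nonempty) ∧ S = internalSet A

theorem Antitone.exists_diag {α β : Type*} {u : ℕ → Set α} (hu : Antitone u)
    (hexit : ∀ x, ∃ k, x ∉ u k) (a : ℕ → α → β) :
    ∃ b : α → β, ∀ n, ∀ x ∈ u n, ∃ m, n ≤ m ∧ x ∈ u m ∧ b x = a m x := by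
  classical
  refine ⟨fun x => a (Nat.find (hexit x) - 1) x, fun n x hx => ?_⟩
  have hn : n < Nat.find (hexit x) := (Nat.lt_find_iff _ _).2 fun k hk => not_not.2 (hu hk hx)
  refine ⟨_, by omega, ?_, rfl⟩
  by_contra h
  have := Nat.find_min' (hexit x) h
  omega

theorem Filter.exists_forall_eventually_of_forall_le {α β : Type*} {l : Filter α}
    {U : ℕ → Set α} (hUl : ∀ k, U k ∈ l) (hU : ⋂ k, U k = ∅)
    {P : ℕ → α → β → Prop} (a : ℕ → α → β) (ha : ∀ k, ∀ᶠ x in l, ∀ n ≤ k, P n x (a k x)) :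
    ∃ b : α → β, ∀ n, ∀ᶠ x in l, P n x (b x) := by
  set s : ℕ → Set α := fun k => U k ∩ {x | ∀ n ≤ k, P n x (a k x)}
  set u : ℕ → Set α := fun k => ⋂ j ∈ Iic k, s j
  have hul : ∀ k, u k ∈ l := fun k =>
    (biInter_mem (finite_Iic k)).2 fun j _ => inter_mem (hUl j) (ha j)
  have hus : ∀ k, u k ⊆ s k := fun k => biInter_subset_of_mem self_mem_Iic
  have hanti : Antitone u := fun j k hjk => biInter_subset_biInter_left (Iic_subset_Iic.2 hjk)
  have hexit : ∀ x, ∃ k, x ∉ u k := fun x => by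
    have hx : x ∉ ⋂ k, U k := hU ▸ notMem_empty x
    obtain ⟨k, hk⟩ : ∃ k, x ∉ U k := by simpa using hx
    exact ⟨k, fun hx => hk (hus k hx).1⟩
  obtain ⟨b, hb⟩ := hanti.exists_diag hexit a
  refine ⟨b, fun n => mem_of_superset (hul n) fun x hx => ?_⟩
  obtain ⟨m, hnm, hxm, hbx⟩ := hb n x hx
  change P n x (b x)
  exact hbx ▸ (hus m hxm).2 n hnm

theorem Ioo_one_div_mem_L (k : ℕ) : Ioo (0 : ℝ) (1 / (k + 1)) ∈ L :=
  nhdsWithin_mono _ Ioo_subset_Ioi_self (Ioo_mem_nhdsGT (by positivity))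

theorem iInter_Ioo_one_div_eq_empty : ⋂ k : ℕ, Ioo (0 : ℝ) (1 / (k + 1)) = ∅ :=
  eq_empty_iff_forall_notMem.2 fun ε hε => by
    obtain ⟨k, hk⟩ := exists_nat_one_div_lt (mem_iInter.1 hε 0).1
    exact (mem_iInter.1 hε k).2.not_gt hk

theorem coe_mem_internalSet {A : ℝ → Set ℝ} {a : ℝ → ℝ} :
    (↑a : SR) ∈ internalSet A ↔ ∀ᶠ ε in L, a ε ∈ A ε :=
  ⟨fun ⟨_, hd, hdA⟩ => (Germ.coe_eq.1 hd).rw (fun ε y => y ∈ A ε) hdA,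
    fun h => ⟨a, rfl, h⟩⟩

theorem countable_saturation (B : ℕ → Set SR)
    (hint : ∀ n, IsInternal (B n))
    (hFIP : ∀ F : Finset ℕ, (⋂ n ∈ F, B n).Nonempty) :
    (⋂ n, B n).Nonempty := by
  choose A _ hBA using hint
  have hfin : ∀ k, ∃ a : ℝ → ℝ, ∀ᶠ ε in L, ∀ n ≤ k, a ε ∈ A n ε := fun k => by
    obtain ⟨x, hx⟩ := hFIP (Finset.Iic k)
    induction x using Germ.inductionOn with | _ a => ?_
    refine ⟨a, (finite_Iic k).eventually_all.2 fun n hn => ?_⟩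
    rw [← coe_mem_internalSet, ← hBA]
    exact mem_iInter₂.1 hx n (Finset.mem_Iic.2 hn)
  choose a ha using hfin
  obtain ⟨b, hb⟩ := exists_forall_eventually_of_forall_le Ioo_one_div_mem_L
    iInter_Ioo_one_div_eq_empty a ha
  exact ⟨b, mem_iInter.2 fun n => hBA n ▸ coe_mem_internalSet.2 (hb n)⟩
end

section
/- An element a ∈ *ℝ is finite (i.e., |a| ≤ N for some standard N ∈ ℕ) provided that |a| ≤ m for every infinitely large m ∈ *ℕ (where m ∈ *ℕ is infinitely large means m ≥ n for every standard n ∈ ℕ). -/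
open Filter Set

/-- *ℕ ⊆ *ℝ : germs of natural-number-valued nets. -/
def sterN : Set SR :=
  {x : SR | ∃ a : ℝ → ℕ, (↑(fun ε => (a ε : ℝ)) : SR) = x}

/-- m is infinitely large if it dominates every standard natural number. -/
def InfinitelyLarge (m : SR) : Prop := ∀ n : ℕ, (n : SR) ≤ m

/-! If `g` is unbounded along a countably generated filter `l` in which points are negligible,
choose `xₖ` in the `k`-th set of an antitone basis `sₖ` with `k < g xₖ`, and let `m x` be the least
`k` with `x ∉ sₖ` or `x = xₖ`. Then `m xₖ ≤ k < g xₖ`, while `m → ∞` along `l` because each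
condition `x ∉ sₖ`, `x = xₖ` fails eventually. For the germ `a = [f]`, taking `g = |f|` yields an
infinitely large `m ∈ *ℕ` with `|a| ≰ m`. -/

theorem Filter.exists_tendsto_atTop_frequently_lt {α : Type*} {l : Filter α}
    [l.IsCountablyGenerated] (hl : l ≤ cofinite) {g : α → ℝ}
    (hg : ∀ n : ℕ, ∃ᶠ x in l, (n : ℝ) < g x) :
    ∃ m : α → ℕ, Tendsto m l atTop ∧ ∃ᶠ x in l, (m x : ℝ) < g x := by
  classical
  obtain ⟨s, hs⟩ := l.exists_antitone_basis
  have hpick : ∀ k : ℕ, ∃ x ∈ s k, (k : ℝ) < g x := fun k =>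
    ((hg k).and_eventually (hs.mem k)).exists.imp fun x hx => ⟨hx.2, hx.1⟩
  choose xs hxs_mem hxs_lt using hpick
  have hex : ∀ x, ∃ k, x ∉ s k ∨ xs k = x := fun x => by
    obtain ⟨k, hk⟩ := hs.mem_iff.1 (le_cofinite_iff_eventually_ne.1 hl x)
    exact ⟨k, Or.inl fun hx => hk hx rfl⟩
  refine ⟨fun x => Nat.find (hex x), tendsto_atTop.2 fun n => ?_, ?_⟩
  · have hfar : ∀ᶠ x in l, ∀ k ∈ Set.Iio n, x ∈ s k ∧ x ≠ xs k :=
      (eventually_all_finite (Set.finite_Iio n)).2 fun k _ =>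
        (show ∀ᶠ x in l, x ∈ s k from hs.mem k).and (le_cofinite_iff_eventually_ne.1 hl (xs k))
    filter_upwards [hfar] with x hx
    refine (Nat.le_find_iff _ _).2 fun k hk => ?_
    obtain ⟨hxs, hne⟩ := hx k hk
    exact not_or.2 ⟨not_not.2 hxs, Ne.symm hne⟩
  · refine (hs.tendsto hxs_mem).frequently (Frequently.of_forall fun k => ?_)
    have hmk : Nat.find (hex (xs k)) ≤ k := Nat.find_min' _ (Or.inr rfl)
    exact lt_of_le_of_lt (by exact_mod_cast hmk) (hxs_lt k)

instance : L.IsCountablyGenerated := by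
  rw [L]
  infer_instance

theorem L_le_cofinite : L ≤ cofinite :=
  (nhdsWithin_mono 0 fun _ hx => ne_of_gt hx.1).trans (nhdsNE_le_cofinite 0)

theorem infinitelyLarge_of_tendsto {m : ℝ → ℕ} (hm : Tendsto m L atTop) :
    InfinitelyLarge (↑(fun x => (m x : ℝ)) : SR) := fun n =>
  show ((fun _ => (n : ℝ) : ℝ → ℝ) : SR) ≤ _ from
    Germ.coe_le.2 <| (tendsto_atTop.1 hm n).mono fun _ => Nat.cast_le.2

theorem finite_of_le_all_infinite (a : SR)
    (h : ∀ m ∈ sterN, InfinitelyLarge m → |a| ≤ m) :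
    ∃ N : ℕ, |a| ≤ (N : SR) := by
  obtain ⟨f, rfl⟩ := Quot.exists_rep a
  by_contra! hunbdd
  have hfreq : ∀ N : ℕ, ∃ᶠ x in L, (N : ℝ) < |f x| := fun N => by
    have hN : ¬ ((fun x => |f x| : ℝ → ℝ) : SR) ≤ ((fun _ => (N : ℝ) : ℝ → ℝ) : SR) := hunbdd N
    exact (not_eventually.1 fun hle => hN (Germ.coe_le.2 hle)).mono fun _ => lt_of_not_ge
  obtain ⟨m, hm, hfm⟩ := exists_tendsto_atTop_frequently_lt L_le_cofinite hfreq
  have hle : ∀ᶠ x in L, |f x| ≤ m x :=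
    Germ.coe_le.1 (h _ ⟨m, rfl⟩ (infinitelyLarge_of_tendsto hm))
  exact hfm (hle.mono fun _ hx => not_lt.2 hx)
end

section
/- Rigidity: if f, g : *ℝ → *ℝ are internal maps with f(x) = g(x) for every infinitesimal x, then there exists a standard real r > 0 such that f(x) = g(x) for all x ∈ *ℝ with |x| ≤ r. -/
open Filter Set

/-- The constant germ. -/
noncomputable def cst (r : ℝ) : SR := ((fun _ => r : ℝ → ℝ) : SR)

/-- x is infinitesimal if |x| ≤ 1/n for every standard n ≥ 1. -/
noncomputable def Infinitesimal (x : SR) : Prop :=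
  ∀ n : ℕ, 0 < n → |x| ≤ cst (1 / n)

/-!
Suppose no standard radius works: then for every `r > 0` there are arbitrarily small `ε` and
points `|y| ≤ r` with `f ε y ≠ g ε y`. Picking such pairs `(εₙ, yₙ)` with `εₙ → 0` and
`|yₙ| ≤ 1/(n+1)`, and gluing the `yₙ` into one net `x` with `x εₙ = yₙ` (and `x = 0` elsewhere),
gives an infinitesimal `x` with `f ε (x ε) ≠ g ε (x ε)` for arbitrarily small `ε`, so that
`[f_ε] x ≠ [g_ε] x`.
-/

open scoped Topology

namespace Filter

variable {α β : Type*} {l : Filter α}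

theorem exists_seq_tendsto_forall_of_frequently [l.IsCountablyGenerated] {p : ℕ → α → Prop}
    (h : ∀ n, ∃ᶠ a in l, p n a) : ∃ x : ℕ → α, Tendsto x atTop l ∧ ∀ n, p n (x n) := by
  obtain ⟨s, hs⟩ := l.exists_antitone_basis
  choose x hx using fun n => ((h n).and_eventually (hs.mem n)).exists
  exact ⟨x, hs.tendsto fun n => (hx n).2, fun n => (hx n).1⟩

theorem tendsto_extend_zero [Zero β] [TopologicalSpace β] {x : ℕ → α} {y : ℕ → β}
    (hl : ∀ a, {a}ᶜ ∈ l) (hy : Tendsto y atTop (𝓝 0)) :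
    Tendsto (Function.extend x y 0) l (𝓝 0) := by
  intro V hV
  obtain ⟨N, hN⟩ := eventually_atTop.1 (hy hV)
  have hfar : ∀ᶠ a in l, ∀ n ∈ Iio N, x n ≠ a :=
    (finite_Iio N).eventually_all.2 fun n _ => mem_of_superset (hl (x n)) fun _ => Ne.symm
  rw [mem_map]
  filter_upwards [hfar] with a ha
  rw [mem_preimage]
  by_cases hrange : ∃ n, x n = a
  · classical
    rw [Function.extend_def, dif_pos hrange]
    exact hN _ (not_lt.1 fun hlt => ha _ hlt (Classical.choose_spec hrange))
  · rw [Function.extend_apply' _ _ _ hrange]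
    exact mem_of_mem_nhds hV

theorem Tendsto.frequently_extend {x : ℕ → α} {y : ℕ → β} {P : α → β → Prop}
    (hx : Tendsto x atTop l) (hP : ∀ n, P (x n) (y n)) (e : α → β) :
    ∃ᶠ a in l, P a (Function.extend x y e a) := by
  classical
  refine hx.frequently (Frequently.of_forall fun n => ?_)
  have hrange : ∃ m, x m = x n := ⟨n, rfl⟩
  have := hP (Classical.choose hrange)
  rw [Classical.choose_spec hrange] at this
  rwa [Function.extend_def, dif_pos hrange]

theorem exists_tendsto_zero_frequently [l.IsCountablyGenerated] (hl : ∀ a, {a}ᶜ ∈ l)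
    {P : α → ℝ → Prop} (h : ∀ r > 0, ∃ᶠ a in l, ∃ y, |y| ≤ r ∧ P a y) :
    ∃ u : α → ℝ, Tendsto u l (𝓝 0) ∧ ∃ᶠ a in l, P a (u a) := by
  obtain ⟨x, hx, hxy⟩ := exists_seq_tendsto_forall_of_frequently fun n : ℕ =>
    h (1 / (n + 1)) Nat.one_div_pos_of_nat
  choose y hy hP using hxy
  have hy0 : Tendsto y atTop (𝓝 0) :=
    squeeze_zero_norm (fun n => (Real.norm_eq_abs _).trans_le (hy n))
      tendsto_one_div_add_atTop_nhds_zero_nat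
  exact ⟨Function.extend x y 0, tendsto_extend_zero hl hy0, hx.frequently_extend hP 0⟩

end Filter

instance inst_s15 : L.IsCountablyGenerated := by
  unfold L
  infer_instance

theorem compl_singleton_mem_L (a : ℝ) : {a}ᶜ ∈ L := by
  refine nhdsWithin_mono 0 (fun ε hε => ne_of_gt hε.1) ?_
  rcases eq_or_ne a 0 with rfl | ha
  · exact self_mem_nhdsWithin
  · exact mem_nhdsWithin_of_mem_nhds (isOpen_compl_singleton.mem_nhds ha.symm)

theorem internalMap_coe_eq_iff {f g : ℝ → ℝ → ℝ} {u : ℝ → ℝ} :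
    internalMap f u = internalMap g u ↔ ∀ᶠ ε in L, f ε (u ε) = g ε (u ε) := by
  simp only [internalMap, Germ.map₂_coe, Germ.coe_eq]
  rfl

theorem infinitesimal_coe_of_tendsto {u : ℝ → ℝ} (hu : Tendsto u L (𝓝 0)) :
    Infinitesimal (u : SR) := by
  intro n hn
  refine Germ.coe_le.2 ((Metric.tendsto_nhds.1 hu (1 / n) (by positivity)).mono fun ε hε => ?_)
  rw [Real.dist_eq, sub_zero] at hε
  exact hε.le

theorem internalMap_eq_of_abs_le {f g : ℝ → ℝ → ℝ} {r : ℝ}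
    (hfg : ∀ᶠ ε in L, ∀ y, |y| ≤ r → f ε y = g ε y) {x : SR} (hx : |x| ≤ cst r) :
    internalMap f x = internalMap g x := by
  induction x using Germ.inductionOn with
  | _ u =>
    rw [internalMap_coe_eq_iff]
    filter_upwards [hfg, Germ.coe_le.1 hx] with ε hε hu using hε _ hu

theorem rigidity (f g : ℝ → ℝ → ℝ)
    (h : ∀ x : SR, Infinitesimal x → internalMap f x = internalMap g x) :
    ∃ r : ℝ, 0 < r ∧ ∀ x : SR, |x| ≤ cst r → internalMap f x = internalMap g x := by
  by_cases hr : ∃ r, 0 < r ∧ ∀ᶠ ε in L, ∀ y, |y| ≤ r → f ε y = g ε y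
  · obtain ⟨r, hr, hfg⟩ := hr
    exact ⟨r, hr, fun x => internalMap_eq_of_abs_le hfg⟩
  · push Not at hr
    obtain ⟨u, hu, hne⟩ := exists_tendsto_zero_frequently compl_singleton_mem_L hr
    have heq := internalMap_coe_eq_iff.1 (h u (infinitesimal_coe_of_tendsto hu))
    obtain ⟨ε, hne, heq⟩ := (hne.and_eventually heq).exists
    exact absurd heq hne
end

section
/- Completeness of G_E for countably many seminorms: let E be a real vector space with an increasing sequence of seminorms (p_n). Define moderate (resp. negligible) nets u = (u_ε) ∈ E^(0,1) by: for each n, the net (p_n(u_ε)) is moderate (resp. negligible) in the Colombeau sense. Then every sequence in the quotient G_E = M_E/N_E that is Cauchy with respect to the family of ultrapseudometrics induced by the valuations v_n(u) = sup{ m ∈ ℤ : p_n(u_ε) ≤ ε^m for small ε } converges in G_E. -/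
open Filter Set

/-- A net of elements of E is moderate w.r.t. the seminorms p. -/
def ModerateNet {E : Type*} [AddCommGroup E] [Module ℝ E]
    (p : ℕ → Seminorm ℝ E) (u : ℝ → E) : Prop :=
  ∀ n : ℕ, ∃ N : ℕ, ∀ᶠ ε in L, p n (u ε) ≤ ε⁻¹ ^ N

/-!
The Cauchy condition yields indices `c 0 ≤ c 1 ≤ ⋯` with `p i (u k ε - u l ε) ≤ ε ^ j` for small `ε`
whenever `i ≤ j` and `k, l ≥ c j`. Each of these estimates only holds below its own threshold in
`ε`, so the limit is taken diagonally: `v ε = u (c (J ε)) ε`, where `J ε → ∞` as `ε → 0` slowly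
enough that `ε` lies below the thresholds of the finitely many estimates among
`u (c 0), …, u (c (J ε))`. Moderateness of `v` is inherited from any `u k` with
`p n (u k ε - v ε) ≤ 1` for small `ε`.
-/

namespace Filter

theorem exists_tendsto_atTop_eventually_mem {α : Type*} {f : Filter α} [f.IsCountablyGenerated]
    (hf : ∀ x, ∀ᶠ y in f, y ≠ x) {S : ℕ → Set α} (hS : ∀ N, S N ∈ f) :
    ∃ J : α → ℕ, Tendsto J f atTop ∧ ∀ᶠ x in f, x ∈ S (J x) := by
  classical
  obtain ⟨B, hB⟩ := f.exists_antitone_basis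
  let A : ℕ → Set α := fun N => B N ∩ S N
  have hA : ∀ N, A N ∈ f := fun N => inter_mem (hB.mem N) (hS N)
  have hleave : ∀ x, ∃ N, x ∉ A (N + 1) := by
    intro x
    obtain ⟨N, hN⟩ := hB.mem_iff.1 (hf x)
    exact ⟨N, fun hx => hN (hB.antitone N.le_succ hx.1) rfl⟩
  refine ⟨fun x => Nat.find (hleave x), ?_, ?_⟩
  · refine tendsto_atTop.2 fun N => ?_
    filter_upwards [(Set.finite_le_nat N).eventually_all.2 fun k _ => hA k] with x hx
    by_contra! hlt
    exact Nat.find_spec (hleave x) (hx _ hlt)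
  · filter_upwards [hA 0] with x hx0
    rcases hJ : Nat.find (hleave x) with _ | j
    · exact hx0.2
    · exact (not_not.1 (Nat.find_min (hleave x) (by omega : j < Nat.find (hleave x)))).2

end Filter

lemma eventually_mem_Ioo_L : ∀ᶠ ε in L, 0 < ε ∧ ε < 1 :=
  self_mem_nhdsWithin

lemma eventually_lt_L {a : ℝ} (ha : 0 < a) : ∀ᶠ ε in L, ε < a :=
  mem_nhdsWithin_of_mem_nhds (Iio_mem_nhds ha)

lemma eventually_ne_L (x : ℝ) : ∀ᶠ ε in L, ε ≠ x := by
  rcases le_or_gt x 0 with hx | hx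
  · filter_upwards [eventually_mem_Ioo_L] with ε hε using (hx.trans_lt hε.1).ne'
  · filter_upwards [eventually_lt_L hx] with ε hε using hε.ne

section Seminorm

variable {E : Type*} [AddCommGroup E] [Module ℝ E]

lemma exists_eventually_le_inv_pow_of_sub {q : Seminorm ℝ E} {f g : ℝ → E}
    (hf : ∃ N : ℕ, ∀ᶠ ε in L, q (f ε) ≤ ε⁻¹ ^ N) (hfg : ∀ᶠ ε in L, q (f ε - g ε) ≤ 1) :
    ∃ N : ℕ, ∀ᶠ ε in L, q (g ε) ≤ ε⁻¹ ^ N := by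
  obtain ⟨N, hN⟩ := hf
  refine ⟨N + 1, ?_⟩
  filter_upwards [hN, hfg, eventually_mem_Ioo_L, eventually_lt_L (by norm_num : (0 : ℝ) < 1 / 2)]
    with ε hfε hfgε hε hε2
  have htwo : 2 ≤ ε⁻¹ := by
    rw [le_inv_comm₀ two_pos hε.1]
    linarith
  have hone : 1 ≤ ε⁻¹ ^ N := one_le_pow₀ (by linarith)
  calc q (g ε) = q (f ε - (f ε - g ε)) := by rw [sub_sub_cancel]
    _ ≤ q (f ε) + q (f ε - g ε) := map_sub_le_add q _ _
    _ ≤ ε⁻¹ ^ N + 1 := add_le_add hfε hfgε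
    _ ≤ ε⁻¹ ^ (N + 1) := by rw [pow_succ]; nlinarith

lemma eventually_sub_le_pow_of_lt {q : Seminorm ℝ E} {f g h : ℝ → E} {m s : ℕ} (hms : m < s)
    (hfg : ∀ᶠ ε in L, q (f ε - g ε) ≤ ε ^ s) (hgh : ∀ᶠ ε in L, q (g ε - h ε) ≤ ε ^ s) :
    ∀ᶠ ε in L, q (f ε - h ε) ≤ ε ^ m := by
  filter_upwards [hfg, hgh, eventually_mem_Ioo_L, eventually_lt_L (by norm_num : (0 : ℝ) < 1 / 2)]
    with ε hfgε hghε hε hε2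
  have hs : ε ^ s ≤ ε ^ (m + 1) := pow_le_pow_of_le_one hε.1.le hε.2.le hms
  have hm : 0 ≤ ε ^ m := pow_nonneg hε.1.le m
  calc q (f ε - h ε) = q ((f ε - g ε) + (g ε - h ε)) := by rw [sub_add_sub_cancel]
    _ ≤ q (f ε - g ε) + q (g ε - h ε) := map_add_le_add q _ _
    _ ≤ 2 * ε ^ (m + 1) := by linarith
    _ ≤ ε ^ m := by rw [pow_succ]; nlinarith

variable (p : ℕ → Seminorm ℝ E)

lemma exists_monotone_cauchy_indices {u : ℕ → ℝ → E}
    (hC : ∀ n m : ℕ, ∃ K : ℕ, ∀ k l : ℕ, K ≤ k → K ≤ l →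
      ∀ᶠ ε in L, p n (u k ε - u l ε) ≤ ε ^ m) :
    ∃ c : ℕ → ℕ, Monotone c ∧ ∀ i j k l : ℕ, i ≤ j → c j ≤ k → c j ≤ l →
      ∀ᶠ ε in L, p i (u k ε - u l ε) ≤ ε ^ j := by
  have htail : ∀ j, ∀ᶠ K in atTop, ∀ i ≤ j, ∀ k l : ℕ, K ≤ k → K ≤ l →
      ∀ᶠ ε in L, p i (u k ε - u l ε) ≤ ε ^ j := fun j =>
    (Set.finite_le_nat j).eventually_all.2 fun i _ =>
      let ⟨K, hK⟩ := hC i j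
      eventually_atTop.2 ⟨K, fun _ hK' k l hk hl => hK k l (hK'.trans hk) (hK'.trans hl)⟩
  obtain ⟨c, hc_mono, hc⟩ := extraction_forall_of_eventually htail
  exact ⟨c, hc_mono.monotone, fun i j k l hij => hc j i hij k l⟩

lemma exists_diagonal_limit {w : ℕ → ℝ → E}
    (hw : ∀ i j l : ℕ, i ≤ j → j ≤ l → ∀ᶠ ε in L, p i (w j ε - w l ε) ≤ ε ^ j) :
    ∃ v : ℝ → E, ∀ i j : ℕ, i ≤ j → ∀ᶠ ε in L, p i (w j ε - v ε) ≤ ε ^ j := by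
  let S : ℕ → Set ℝ := fun l => {ε | ∀ j ≤ l, ∀ i ≤ j, p i (w j ε - w l ε) ≤ ε ^ j}
  have hS : ∀ l, S l ∈ L := fun l =>
    (Set.finite_le_nat l).eventually_all.2 fun j hjl =>
      (Set.finite_le_nat j).eventually_all.2 fun i hij => hw i j l hij hjl
  obtain ⟨J, hJ, hJS⟩ := exists_tendsto_atTop_eventually_mem eventually_ne_L hS
  refine ⟨fun ε => w (J ε) ε, fun i j hij => ?_⟩
  filter_upwards [hJ.eventually_ge_atTop j, hJS] with ε hj hε using hε j hj i hij

end Seminorm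

theorem GE_complete_general {E : Type*} [AddCommGroup E] [Module ℝ E]
    (p : ℕ → Seminorm ℝ E)
    (u : ℕ → ℝ → E) (hu : ∀ k, ModerateNet p (u k))
    -- Cauchy for the ultrapseudometrics induced by the valuations vₙ
    (hC : ∀ n m : ℕ, ∃ K : ℕ, ∀ k l : ℕ, K ≤ k → K ≤ l →
      ∀ᶠ ε in L, p n (u k ε - u l ε) ≤ ε ^ m) :
    -- there is a moderate net v to which the sequence converges sharply;
    -- i.e. the class of v in G_E = M_E/N_E is the limit
    ∃ v : ℝ → E, ModerateNet p v ∧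
      ∀ n m : ℕ, ∃ K : ℕ, ∀ k : ℕ, K ≤ k →
        ∀ᶠ ε in L, p n (u k ε - v ε) ≤ ε ^ m := by
  obtain ⟨c, hc_mono, hc⟩ := exists_monotone_cauchy_indices p hC
  obtain ⟨v, hv⟩ := exists_diagonal_limit p (w := fun j => u (c j))
    fun i j l hij hjl => hc i j (c j) (c l) hij le_rfl (hc_mono hjl)
  have hconv : ∀ n m : ℕ, ∃ K : ℕ, ∀ k : ℕ, K ≤ k → ∀ᶠ ε in L, p n (u k ε - v ε) ≤ ε ^ m :=
    fun n m => ⟨c (max n (m + 1)), fun k hk => eventually_sub_le_pow_of_lt (by omega)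
      (hc n _ k _ (le_max_left _ _) hk le_rfl) (hv n _ (le_max_left _ _))⟩
  refine ⟨v, fun n => ?_, hconv⟩
  obtain ⟨K, hK⟩ := hconv n 0
  exact exists_eventually_le_inv_pow_of_sub (hu K n) (by simpa using hK K le_rfl)

theorem GE_complete {E : Type*} [AddCommGroup E] [Module ℝ E]
    (p : ℕ → Seminorm ℝ E) (hp : Monotone p)
    (u : ℕ → ℝ → E) (hu : ∀ k, ModerateNet p (u k))
    -- Cauchy for the ultrapseudometrics induced by the valuations vₙ
    (hC : ∀ n m : ℕ, ∃ K : ℕ, ∀ k l : ℕ, K ≤ k → K ≤ l →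
      ∀ᶠ ε in L, p n (u k ε - u l ε) ≤ ε ^ m) :
    -- there is a moderate net v to which the sequence converges sharply;
    -- i.e. the class of v in G_E = M_E/N_E is the limit
    ∃ v : ℝ → E, ModerateNet p v ∧
      ∀ n m : ℕ, ∃ K : ℕ, ∀ k : ℕ, K ≤ k →
        ∀ᶠ ε in L, p n (u k ε - v ε) ≤ ε ^ m :=
  GE_complete_general p u hu hC
end
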